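/- arXiv:1404.2839 — 3 statements merged into one kernel-verified Lean document; each statement's English description precedes it below -/
import Mathlib

section
/- An oracle A ⊆ ℕ is meager engulfing if and only if there exists an A-effectively meager set (an effective-in-A F_σ(A) class that is a union of uniformly Π⁰₁(A) nowhere dense classes) containing every nowhere dense Π⁰₁ class. -/
open Filter

namespace CichonAnalog

/-! ### Oracle computability -/

/-- Partial functions `ℕ →. ℕ` partial recursive relative to the oracle `A ⊆ ℕ`.
This is Mathlib's `Nat.Partrec` with an extra base case for the characteristic
function of the oracle. -/
inductive RecursiveIn (A : Set ℕ) : (ℕ →. ℕ) → Prop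
  | zero : RecursiveIn A (pure 0)
  | succ : RecursiveIn A ↑Nat.succ
  | left : RecursiveIn A ↑fun n : ℕ => n.unpair.1
  | right : RecursiveIn A ↑fun n : ℕ => n.unpair.2
  | oracle : RecursiveIn A ↑fun n : ℕ => A.indicator (fun _ => 1) n
  | pair {f g} : RecursiveIn A f → RecursiveIn A g →
      RecursiveIn A fun n => Nat.pair <$> f n <*> g n
  | comp {f g} : RecursiveIn A f → RecursiveIn A g →
      RecursiveIn A fun n => g n >>= f
  | prec {f g} : RecursiveIn A f → RecursiveIn A g →
      RecursiveIn A (Nat.unpaired fun a n =>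
        n.rec (f a) fun y IH => do let i ← IH; g (Nat.pair a (Nat.pair y i)))
  | rfind {f} : RecursiveIn A f →
      RecursiveIn A fun a => Nat.rfind fun n => (fun m => m = 0) <$> f (Nat.pair a n)

/-- The partial function `f` (between coded spaces) is partial recursive in the oracle `A`. -/
def PartrecIn (A : Set ℕ) {α σ : Type} [Primcodable α] [Primcodable σ] (f : α →. σ) : Prop :=
  RecursiveIn A fun n =>
    Part.bind ↑(Encodable.decode (α := α) n) fun a => (f a).map Encodable.encode

/-- `f ≤_T A` : the (total) function `f` is computable from the oracle `A`. -/
def ComputableIn (A : Set ℕ) {α σ : Type} [Primcodable α] [Primcodable σ] (f : α → σ) : Prop :=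
  PartrecIn A (f : α →. σ)

/-- `W` is computably enumerable in the oracle `A`. -/
def CEIn (A : Set ℕ) {α : Type} [Primcodable α] (W : Set α) : Prop :=
  ∃ f : α →. ℕ, PartrecIn A f ∧ ∀ a, a ∈ W ↔ (f a).Dom

/-- `W` is computably enumerable (unrelativized). -/
def CE {α : Type} [Primcodable α] (W : Set α) : Prop :=
  ∃ f : α →. ℕ, Partrec f ∧ ∀ a, a ∈ W ↔ (f a).Dom

/-! ### Cantor space, `Π⁰₁` classes, effective meagerness -/

/-- The basic clopen set (cylinder) of the finite binary string `σ` in Cantor space. -/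
def Cyl (σ : List Bool) : Set (ℕ → Bool) :=
  {x | ∀ i, i < σ.length → x i = σ.getD i false}

/-- `P` is a `Π⁰₁(A)` class: a closed subset of Cantor space whose complement is the
union of basic clopen sets over a set of strings c.e. in `A`. -/
def Pi01In (A : Set ℕ) (P : Set (ℕ → Bool)) : Prop :=
  ∃ W : Set (List Bool), CEIn A W ∧ P = (⋃ σ ∈ W, Cyl σ)ᶜ

/-- `P` is a (plain) `Π⁰₁` class. -/
def Pi01 (P : Set (ℕ → Bool)) : Prop :=
  ∃ W : Set (List Bool), CE W ∧ P = (⋃ σ ∈ W, Cyl σ)ᶜ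

/-- `C` is a uniformly `Π⁰₁(A)` sequence of classes. -/
def UnifPi01In (A : Set ℕ) (C : ℕ → Set (ℕ → Bool)) : Prop :=
  ∃ W : Set (ℕ × List Bool), CEIn A W ∧
    ∀ m, C m = (⋃ σ ∈ {s | (m, s) ∈ W}, Cyl σ)ᶜ

/-- `C` is a uniformly `Π⁰₁` sequence of classes. -/
def UnifPi01 (C : ℕ → Set (ℕ → Bool)) : Prop :=
  ∃ W : Set (ℕ × List Bool), CE W ∧
    ∀ m, C m = (⋃ σ ∈ {s | (m, s) ∈ W}, Cyl σ)ᶜ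

/-- `S` is effectively meager relative to `A`: it is contained in the union of a
uniformly `Π⁰₁(A)` sequence of nowhere dense classes. -/
def EffMeagerIn (A : Set ℕ) (S : Set (ℕ → Bool)) : Prop :=
  ∃ C : ℕ → Set (ℕ → Bool), UnifPi01In A C ∧ (∀ m, IsNowhereDense (C m)) ∧ S ⊆ ⋃ m, C m

/-- `S` is effectively meager (unrelativized). -/
def EffMeager (S : Set (ℕ → Bool)) : Prop :=
  ∃ C : ℕ → Set (ℕ → Bool), UnifPi01 C ∧ (∀ m, IsNowhereDense (C m)) ∧ S ⊆ ⋃ m, C m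

/-- `A` is meager engulfing: some `A`-effectively meager set contains every
effectively meager set. -/
def MeagerEngulfing (A : Set ℕ) : Prop :=
  ∃ S, EffMeagerIn A S ∧ ∀ T, EffMeager T → T ⊆ S

/-- `A` is weakly meager engulfing: some `A`-effectively meager set contains every
computable element of Cantor space. -/
def WeaklyMeagerEngulfing (A : Set ℕ) : Prop :=
  ∃ S, EffMeagerIn A S ∧ ∀ x : ℕ → Bool, Computable x → x ∈ S

/-- `V` is a computable set of finite binary strings. -/
def ComputableStringSet (V : Set (List Bool)) : Prop :=
  ∃ χ : List Bool → Bool, Computable χ ∧ ∀ s, s ∈ V ↔ χ s = true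

/-- `V` is a dense set of finite binary strings: every string has an extension in `V`. -/
def DenseStringSet (V : Set (List Bool)) : Prop :=
  ∀ σ : List Bool, ∃ τ ∈ V, σ <+: τ

/-- `x ∈ 2^ω` is weakly 1-generic: for every computable dense set `V` of finite
binary strings, some initial segment of `x` lies in `V`. -/
def Weakly1Generic (x : ℕ → Bool) : Prop :=
  ∀ V : Set (List Bool), ComputableStringSet V → DenseStringSet V →
    ∃ n, (List.ofFn fun i : Fin n => x i) ∈ V

/-! ### Domination properties -/

/-- `A` is high: `A` computes a function dominating every total computable function. -/
def High (A : Set ℕ) : Prop :=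
  ∃ f : ℕ → ℕ, ComputableIn A f ∧
    ∀ g : ℕ → ℕ, Computable g → ∀ᶠ n in atTop, g n ≤ f n

/-- `A` is of hyperimmune degree: `A` computes a function not dominated by any
computable function. -/
def HyperimmuneDegree (A : Set ℕ) : Prop :=
  ∃ f : ℕ → ℕ, ComputableIn A f ∧
    ∀ g : ℕ → ℕ, Computable g → ∃ᶠ n in atTop, g n < f n

/-- `A` is of hyperimmune-free degree: every function computable in `A` is dominated
by a total computable function. -/
def HyperimmuneFree (A : Set ℕ) : Prop :=
  ∀ f : ℕ → ℕ, ComputableIn A f →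
    ∃ g : ℕ → ℕ, Computable g ∧ ∀ᶠ n in atTop, f n ≤ g n

/-! ### Measure on Cantor space, Kurtz and Schnorr tests -/

open scoped Classical in
/-- The uniform measure of the clopen set `⋃ σ ∈ F, [σ]` determined by the finite
list `F` of binary strings: count the binary strings of maximal length extending
some member of `F`, and normalize. -/
noncomputable def listMeasure (F : List (List Bool)) : ℚ :=
  letI k := (F.map List.length).foldr max 0
  ((Finset.univ.filter fun v : Fin k → Bool =>
      ∃ σ ∈ F, σ <+: List.ofFn v).card : ℚ) / 2 ^ k

/-- The clopen subset of Cantor space given explicitly as a finite union of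
basic clopen sets. -/
def ClopSet (F : List (List Bool)) : Set (ℕ → Bool) := ⋃ σ ∈ F, Cyl σ

/-- The effectively open subset of Cantor space enumerated by the sequence of
finite stages `g`. -/
def OpenSet (g : ℕ → List (List Bool)) : Set (ℕ → Bool) := ⋃ s, ClopSet (g s)

/-- The measure of the open set enumerated by the stages `g`: the supremum of the
measures of its finite partial unions. -/
noncomputable def openMeasure (g : ℕ → List (List Bool)) : ℝ :=
  ⨆ s : ℕ, (listMeasure ((List.range (s + 1)).flatMap g) : ℝ)

/-- A Kurtz test relative to `A`: an `A`-computable sequence of explicitly given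
clopen sets, the `m`-th of measure at most `2 ^ (-m)`. -/
def KurtzTestIn (A : Set ℕ) (G : ℕ → List (List Bool)) : Prop :=
  ComputableIn A G ∧ ∀ m, listMeasure (G m) ≤ (1 / 2) ^ m

/-- A (plain) Kurtz test. -/
def KurtzTest (G : ℕ → List (List Bool)) : Prop :=
  Computable G ∧ ∀ m, listMeasure (G m) ≤ (1 / 2) ^ m

/-- A Schnorr test relative to `A`: an `A`-computable doubly indexed sequence of finite
stages such that the `m`-th effectively open set `⋃ s, ClopSet (g m s)` has measure at
most `2 ^ (-m)`, and this measure is a real computable in `A` uniformly in `m`. -/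
def SchnorrTestIn (A : Set ℕ) (g : ℕ → ℕ → List (List Bool)) : Prop :=
  ComputableIn A (fun p : ℕ × ℕ => g p.1 p.2) ∧
  (∀ m, openMeasure (g m) ≤ (1 / 2) ^ m) ∧
  ∃ q : ℕ × ℕ → ℚ, ComputableIn A q ∧
    ∀ m k, |openMeasure (g m) - (q (m, k) : ℝ)| ≤ (1 / 2) ^ k

/-- A (plain) Schnorr test. -/
def SchnorrTest (g : ℕ → ℕ → List (List Bool)) : Prop :=
  Computable (fun p : ℕ × ℕ => g p.1 p.2) ∧
  (∀ m, openMeasure (g m) ≤ (1 / 2) ^ m) ∧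
  ∃ q : ℕ × ℕ → ℚ, Computable q ∧
    ∀ m k, |openMeasure (g m) - (q (m, k) : ℝ)| ≤ (1 / 2) ^ k

/-- `N` is Schnorr null relative to `A`. -/
def SchnorrNullIn (A : Set ℕ) (N : Set (ℕ → Bool)) : Prop :=
  ∃ g, SchnorrTestIn A g ∧ N ⊆ ⋂ m, OpenSet (g m)

/-- `N` is Schnorr null (unrelativized). -/
def SchnorrNull (N : Set (ℕ → Bool)) : Prop :=
  ∃ g, SchnorrTest g ∧ N ⊆ ⋂ m, OpenSet (g m)

/-- `x ∈ 2^ω` is Schnorr random: it belongs to no Schnorr null set. -/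
def SchnorrRandom (x : ℕ → Bool) : Prop := ∀ N, SchnorrNull N → x ∉ N

/-- `A` is Kurtz engulfing: there is an `A`-computable sequence of Kurtz tests relative
to `A` such that every Kurtz null set is contained in the null set of one of them. -/
def KurtzEngulfing (A : Set ℕ) : Prop :=
  ∃ G : ℕ → ℕ → List (List Bool),
    ComputableIn A (fun p : ℕ × ℕ => G p.1 p.2) ∧
    (∀ i m, listMeasure (G i m) ≤ (1 / 2) ^ m) ∧
    ∀ L, KurtzTest L → ∃ i, (⋂ m, ClopSet (L m)) ⊆ ⋂ m, ClopSet (G i m)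

/-- `A` is weakly Kurtz engulfing: there is an `A`-computable sequence of Kurtz tests
relative to `A` such that the union of their null sets contains every computable
element of Cantor space. -/
def WeaklyKurtzEngulfing (A : Set ℕ) : Prop :=
  ∃ G : ℕ → ℕ → List (List Bool),
    ComputableIn A (fun p : ℕ × ℕ => G p.1 p.2) ∧
    (∀ i m, listMeasure (G i m) ≤ (1 / 2) ^ m) ∧
    ∀ x : ℕ → Bool, Computable x → ∃ i, x ∈ ⋂ m, ClopSet (G i m)

/-- `A` is weakly Schnorr engulfing: some set Schnorr null relative to `A` contains
every computable element of Cantor space. -/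
def WeaklySchnorrEngulfing (A : Set ℕ) : Prop :=
  ∃ N, SchnorrNullIn A N ∧ ∀ x : ℕ → Bool, Computable x → x ∈ N

/-! ### DNR and PA degrees -/

/-- The `e`-th partial computable function. -/
noncomputable def phi (e : ℕ) : ℕ →. ℕ := (Denumerable.ofNat Nat.Partrec.Code e).eval

/-- `h` is diagonally nonrecursive. -/
def DNRFun (h : ℕ → ℕ) : Prop := ∀ e, ∀ y ∈ phi e e, h e ≠ y

/-- `A` is DNR: `A` computes a diagonally nonrecursive function. -/
def DNRDegree (A : Set ℕ) : Prop := ∃ h : ℕ → ℕ, ComputableIn A h ∧ DNRFun h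

/-- `A` is PA: `A` computes a `{0,1}`-valued diagonally nonrecursive function. -/
def PA (A : Set ℕ) : Prop :=
  ∃ h : ℕ → ℕ, ComputableIn A h ∧ (∀ e, h e ≤ 1) ∧ DNRFun h

/-! ### Traces -/

/-- The trace `σ` (satisfying `|σ n| ≤ n`) traces the function `f` if
`f n ∈ σ n` for all but finitely many `n`. -/
def Traces (σ : ℕ → Finset ℕ) (f : ℕ → ℕ) : Prop := ∀ᶠ n in atTop, f n ∈ σ n

/-- `σ` is a `(D, g)`-trace relative to `A`: `D` is infinite and c.e. in `A`, `g` is a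
partial `A`-computable function with `D ⊆ dom g` and `g n ≥ n` on its domain, and `σ`
is partial `A`-computable, defined on `D`, with `|σ n| < g n` for all `n ∈ D`. -/
def IsDGTraceIn (A : Set ℕ) (D : Set ℕ) (g : ℕ →. ℕ) (σ : ℕ →. Finset ℕ) : Prop :=
  D.Infinite ∧ CEIn A D ∧ PartrecIn A g ∧ D ⊆ g.Dom ∧ (∀ n, ∀ y ∈ g n, n ≤ y) ∧
  PartrecIn A σ ∧ D ⊆ σ.Dom ∧ ∀ n ∈ D, ∀ S ∈ σ n, ∀ b ∈ g n, S.card < b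

/-- `σ` is a `(D, g)`-trace (unrelativized). -/
def IsDGTrace (D : Set ℕ) (g : ℕ →. ℕ) (σ : ℕ →. Finset ℕ) : Prop :=
  D.Infinite ∧ CE D ∧ Partrec g ∧ D ⊆ g.Dom ∧ (∀ n, ∀ y ∈ g n, n ≤ y) ∧
  Partrec σ ∧ D ⊆ σ.Dom ∧ ∀ n ∈ D, ∀ S ∈ σ n, ∀ b ∈ g n, S.card < b

/-- The `(D, g)`-trace `σ` traces `f`: `f n ∈ σ n` for all but finitely many `n ∈ D`. -/
def DGTraces (D : Set ℕ) (σ : ℕ →. Finset ℕ) (f : ℕ → ℕ) : Prop :=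
  ∀ᶠ n in atTop, n ∈ D → ∀ S ∈ σ n, f n ∈ S

/-! A nowhere dense `Π⁰₁` class is effectively meager on its own, as a constant sequence, and
every member of a uniformly `Π⁰₁` sequence is a `Π⁰₁` class. So the effectively meager sets are
exactly the subsets of countable unions of nowhere dense `Π⁰₁` classes, and engulfing either
family is the same property. -/

theorem CE.preimage {α β : Type} [Primcodable α] [Primcodable β] {W : Set β} (hW : CE W)
    {g : α → β} (hg : Computable g) : CE (g ⁻¹' W) := by
  obtain ⟨f, hf, hfW⟩ := hW
  exact ⟨fun a => f (g a), hf.comp hg, fun a => hfW (g a)⟩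

theorem Pi01.unifPi01_const {P : Set (ℕ → Bool)} (hP : Pi01 P) : UnifPi01 fun _ => P := by
  obtain ⟨W, hW, rfl⟩ := hP
  exact ⟨Prod.snd ⁻¹' W, hW.preimage Computable.snd, fun _ => rfl⟩

theorem UnifPi01.pi01 {C : ℕ → Set (ℕ → Bool)} (hC : UnifPi01 C) (m : ℕ) : Pi01 (C m) := by
  obtain ⟨W, hW, hCW⟩ := hC
  exact ⟨(m, ·) ⁻¹' W, hW.preimage ((Computable.const m).pair Computable.id), hCW m⟩

theorem Pi01.effMeager {P : Set (ℕ → Bool)} (hP : Pi01 P) (hnd : IsNowhereDense P) :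
    EffMeager P :=
  ⟨fun _ => P, hP.unifPi01_const, fun _ => hnd, Set.subset_iUnion (fun _ : ℕ => P) 0⟩

/-- `A` is meager engulfing iff some `A`-effectively meager set contains
every nowhere dense `Π⁰₁` class. -/
theorem stmt2 (A : Set ℕ) :
    MeagerEngulfing A ↔
      ∃ S, EffMeagerIn A S ∧
        ∀ P : Set (ℕ → Bool), Pi01 P → IsNowhereDense P → P ⊆ S := by
  constructor
  · rintro ⟨S, hS, hengulf⟩
    exact ⟨S, hS, fun P hP hnd => hengulf P (hP.effMeager hnd)⟩
  · rintro ⟨S, hS, hengulf⟩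
    refine ⟨S, hS, fun T ⟨C, hC, hnd, hTC⟩ => hTC.trans ?_⟩
    exact Set.iUnion_subset fun m => hengulf (C m) (hC.pi01 m) (hnd m)

end CichonAnalog
end

section
/- Every PA oracle A ⊆ ℕ is weakly Kurtz engulfing. -/
open Filter

namespace CichonAnalog

/-! By s-m-n there is a computable `d` with `φ_{d(e,n)}(d(e,n)) ≃ φ_e(n)`. A `{0,1}`-valued DNR
function `h` avoids `φ_e(n)` at `d(e,n)`, so the bit `[h(d(e,n)) = 0]` equals `φ_e(n)` whenever
`φ_e` is a computable element of Cantor space. The `e`-th test takes at level `m` the cylinder of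
the first `m` of these bits: it has measure `2^{-m}`, and if `φ_e = x` every level contains `x`. -/

section OracleComputability

variable {A : Set ℕ}

theorem RecursiveIn.of_natPartrec {f : ℕ →. ℕ} (hf : Nat.Partrec f) : RecursiveIn A f := by
  induction hf with
  | zero => exact .zero
  | succ => exact .succ
  | left => exact .left
  | right => exact .right
  | pair _ _ ihf ihg => exact .pair ihf ihg
  | comp _ _ ihf ihg => exact .comp ihf ihg
  | prec _ _ ihf ihg => exact .prec ihf ihg
  | rfind _ ih => exact .rfind ih

theorem RecursiveIn.of_computable {f : ℕ → ℕ} (hf : Computable f) : RecursiveIn A f :=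
  .of_natPartrec (Partrec.nat_iff.1 hf)

theorem RecursiveIn.congr {f g : ℕ →. ℕ} (hf : RecursiveIn A f) (h : ∀ n, f n = g n) :
    RecursiveIn A g :=
  funext h ▸ hf

theorem RecursiveIn.comp_coe {f g : ℕ → ℕ} (hf : RecursiveIn A f) (hg : RecursiveIn A g) :
    RecursiveIn A ↑(f ∘ g) :=
  (RecursiveIn.comp hf hg).congr fun _ => Part.bind_some _ _

theorem RecursiveIn.pair_coe {f g : ℕ → ℕ} (hf : RecursiveIn A f) (hg : RecursiveIn A g) :
    RecursiveIn A ↑fun n => Nat.pair (f n) (g n) :=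
  (RecursiveIn.pair hf hg).congr fun n => by simp [Seq.seq]

theorem RecursiveIn.prec_coe {f g : ℕ → ℕ} (hf : RecursiveIn A f) (hg : RecursiveIn A g) :
    RecursiveIn A ↑(Nat.unpaired fun a n =>
      (n.rec (f a) fun y IH => g (Nat.pair a (Nat.pair y IH)) : ℕ)) := by
  refine (RecursiveIn.prec hf hg).congr fun p => ?_
  simp only [Nat.unpaired, PFun.coe_val]
  induction p.unpair.2 with
  | zero => rfl
  | succ n ih => exact (congrArg (· >>= _) ih).trans (Part.bind_some _ _)

theorem computableIn_nat_prod_iff {σ : Type} [Primcodable σ] {f : ℕ × ℕ → σ} :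
    ComputableIn A f ↔ RecursiveIn A ↑fun n : ℕ => Encodable.encode (f n.unpair) := by
  simp only [ComputableIn, PartrecIn, PFun.coe_val, Part.map_some]
  exact (congrArg (RecursiveIn A) (funext fun n => by simp)).to_iff

theorem ComputableIn.comp_computable {α β σ : Type} [Primcodable α] [Primcodable β]
    [Primcodable σ] {f : β → σ} {g : α → β} (hf : ComputableIn A f) (hg : Computable g) :
    ComputableIn A (f ∘ g) := by
  refine (RecursiveIn.comp hf (RecursiveIn.of_natPartrec hg)).congr fun n => ?_
  cases Encodable.decode (α := α) n <;> simp

theorem Computable.comp_computableIn {α β σ : Type} [Primcodable α] [Primcodable β]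
    [Primcodable σ] {f : β → σ} {g : α → β} (hf : Computable f) (hg : ComputableIn A g) :
    ComputableIn A (f ∘ g) := by
  refine (RecursiveIn.comp (RecursiveIn.of_natPartrec hf) hg).congr fun n => ?_
  cases Encodable.decode (α := α) n <;> simp

theorem exists_recursiveIn_snoc {f : ℕ × ℕ → ℕ} (hf : ComputableIn A f) :
    ∃ step : ℕ → ℕ, RecursiveIn A step ∧ ∀ a y (l : List ℕ),
      step (Nat.pair a (Nat.pair y (Encodable.encode l))) = Encodable.encode (l ++ [f (a, y)]) := by
  rw [computableIn_nat_prod_iff] at hf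
  -- the step is applied to `⟪⟪a, ⟪y, encode l⟫⟫, f (a, y)⟫`
  have hsnoc : Computable fun u : ℕ =>
      Encodable.encode (Denumerable.ofNat (List ℕ) u.unpair.1.unpair.2.unpair.2 ++ [u.unpair.2]) :=
    (Primrec.encode.comp (Primrec.list_concat.comp
      ((Primrec.ofNat _).comp (Primrec.snd.comp (Primrec.unpair.comp (Primrec.snd.comp
        (Primrec.unpair.comp (Primrec.fst.comp Primrec.unpair))))))
      (Primrec.snd.comp Primrec.unpair))).to_comp
  have harg : Computable fun t : ℕ => Nat.pair t.unpair.1 t.unpair.2.unpair.1 :=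
    (Primrec₂.natPair.comp (Primrec.fst.comp Primrec.unpair)
      (Primrec.fst.comp (Primrec.unpair.comp (Primrec.snd.comp Primrec.unpair)))).to_comp
  refine ⟨_, (RecursiveIn.of_computable hsnoc).comp_coe
    ((RecursiveIn.of_computable Computable.id).pair_coe (hf.comp_coe (.of_computable harg))),
    fun a y l => ?_⟩
  simp

theorem ComputableIn.list_map_range {f : ℕ × ℕ → ℕ} (hf : ComputableIn A f) :
    ComputableIn A fun p : ℕ × ℕ => (List.range p.2).map fun i => f (p.1, i) := by
  obtain ⟨step, hstep, hstep_eq⟩ := exists_recursiveIn_snoc hf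
  have hrec : ∀ a m, (m.rec (Encodable.encode ([] : List ℕ)) fun y IH =>
      step (Nat.pair a (Nat.pair y IH)) : ℕ) =
      Encodable.encode ((List.range m).map fun i => f (a, i)) := by
    intro a m
    induction m with
    | zero => rfl
    | succ m ih =>
      change step _ = _
      rw [ih, hstep_eq, List.range_succ, List.map_append, List.map_singleton]
  rw [computableIn_nat_prod_iff]
  have hnil : RecursiveIn A ↑fun _ : ℕ => Encodable.encode ([] : List ℕ) :=
    .of_computable (Computable.const _)
  refine (hnil.prec_coe hstep).congr fun n => ?_
  simp only [PFun.coe_val, Nat.unpaired, hrec]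

end OracleComputability

theorem listMeasure_singleton (σ : List Bool) : listMeasure [σ] = (1 / 2) ^ σ.length := by
  classical
  -- generalizing the length `k` lets `Fin k` become `Fin σ.length`
  suffices ∀ k, k = σ.length →
      ((Finset.univ.filter fun v : Fin k → Bool => ∃ τ ∈ [σ], τ <+: List.ofFn v).card : ℚ) /
        2 ^ k = (1 / 2) ^ σ.length from this _ (by simp)
  rintro k rfl
  have hfilter : (Finset.univ.filter fun v : Fin σ.length → Bool =>
      ∃ τ ∈ [σ], τ <+: List.ofFn v) = {σ.get} := by
    ext v
    simp only [Finset.mem_filter, Finset.mem_univ, true_and, List.mem_singleton,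
      exists_eq_left, Finset.mem_singleton]
    constructor
    · intro hpre
      exact List.ofFn_injective ((hpre.eq_of_length (by simp)).symm.trans (List.ofFn_get σ).symm)
    · rintro rfl
      rw [List.ofFn_get]
  rw [hfilter]
  simp

theorem mem_cyl_map_range (x : ℕ → Bool) (m : ℕ) : x ∈ Cyl ((List.range m).map x) := by
  intro i hi
  simp_all

open Nat.Partrec (Code) in
theorem exists_diagonal_index :
    ∃ d : ℕ → ℕ → ℕ, Computable₂ d ∧ ∀ e n, phi (d e n) (d e n) = phi e n := by
  have hpart : Partrec fun m : ℕ => phi m.unpair.1.unpair.1 m.unpair.1.unpair.2 :=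
    Code.eval_part.comp ((Computable.ofNat Code).comp
        (Primrec.fst.comp (Primrec.unpair.comp (Primrec.fst.comp Primrec.unpair))).to_comp)
      (Primrec.snd.comp (Primrec.unpair.comp (Primrec.fst.comp Primrec.unpair))).to_comp
  obtain ⟨c, hc⟩ := Code.exists_code.1 (Partrec.nat_iff.1 hpart)
  refine ⟨fun e n => Encodable.encode (c.curry (Nat.pair e n)),
    (Primrec.encode.comp (Code.primrec₂_curry.comp (Primrec.const c)
      (Primrec₂.natPair.comp Primrec.fst Primrec.snd))).to_comp, fun e n => ?_⟩
  simp [phi, Code.eval_curry, hc]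

theorem DNRFun.decide_eq_zero {h : ℕ → ℕ} (hdnr : DNRFun h) (hle : ∀ e, h e ≤ 1) {e : ℕ}
    {b : Bool} (hb : Encodable.encode b ∈ phi e e) : decide (h e = 0) = b := by
  cases b
  · exact decide_eq_false (hdnr e 0 hb)
  · exact decide_eq_true (by have := hdnr e 1 hb; have := hle e; omega)

/-- every PA oracle is weakly Kurtz engulfing. -/
theorem stmt6 (A : Set ℕ) (hA : PA A) : WeaklyKurtzEngulfing A := by
  obtain ⟨h, hh, hle, hdnr⟩ := hA
  obtain ⟨d, hd, hdiag⟩ := exists_diagonal_index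
  refine ⟨fun e m => [(List.range m).map fun i => decide (h (d e i) = 0)], ?_,
    fun e m => by simp [listMeasure_singleton], fun x hx => ?_⟩
  · have hwrap : Computable fun l : List ℕ => [l.map fun k => decide (k = 0)] :=
      (Primrec.list_cons.comp (Primrec.list_map Primrec.id
        (Primrec.eq.comp Primrec.snd (Primrec.const 0)).decide.to₂) (Primrec.const [])).to_comp
    simpa [Function.comp_def] using
      Computable.comp_computableIn hwrap (hh.comp_computable hd).list_map_range
  · obtain ⟨c, hc⟩ := Nat.Partrec.Code.exists_code.1 hx
    have hguess : ∀ n, decide (h (d (Encodable.encode c) n) = 0) = x n := fun n =>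
      hdnr.decide_eq_zero hle (by rw [hdiag]; simp [phi, hc])
    refine ⟨Encodable.encode c, Set.mem_iInter.2 fun m => ?_⟩
    simpa [ClopSet, hguess] using mem_cyl_map_range x m

end CichonAnalog
end

section
/- For every oracle A ⊆ ℕ the following are equivalent: (i) A is of hyperimmune degree; (ii) A computes a function not traced by any partial trace; (iii) for every partial computable function g, there exists f ≤_T A such that f is not traced by any (D,g)-trace for any c.e. set D. -/
open Filter

namespace CichonAnalog

/-!
If `p ≤_T A` escapes every computable function, so does its running maximum `f`, which is
moreover monotone. Given a partial trace `σ` on an infinite c.e. set `D`, one can computably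
find, for each `m`, some `n ≥ m` in `D` and bound `σ n` by its code `b m`. If `σ` traced `f`,
then `f m ≤ f n ≤ b m` for almost all `m`, so the computable `b` would dominate `f`.

Conversely, if every `f ≤_T A` is dominated by a computable `h`, the sets `{0, …, h n}` trace
`f`. To make their size bound independent of `h`, reserve the column `{n | n.unpair.1 = e}`
for the `e`-th partial computable function: on the column of a code of `h`, the single bound
`n ↦ max n (φ_{n.unpair.1}(n) + 2)` exceeds `h n + 1`.
-/

open Encodable Denumerable Nat.Partrec

theorem RecursiveIn.of_partrec {A : Set ℕ} {f : ℕ →. ℕ} (hf : Nat.Partrec f) :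
    RecursiveIn A f := by
  induction hf with
  | zero => exact .zero
  | succ => exact .succ
  | left => exact .left
  | right => exact .right
  | pair _ _ ih₁ ih₂ => exact .pair ih₁ ih₂
  | comp _ _ ih₁ ih₂ => exact .comp ih₁ ih₂
  | prec _ _ ih₁ ih₂ => exact .prec ih₁ ih₂
  | rfind _ ih => exact .rfind ih

theorem RecursiveIn.of_eq {A : Set ℕ} {f g : ℕ →. ℕ} (hf : RecursiveIn A f)
    (H : ∀ n, f n = g n) : RecursiveIn A g :=
  funext H ▸ hf

namespace ComputableIn

variable {A : Set ℕ}

theorem of_computable {α σ : Type} [Primcodable α] [Primcodable σ] {f : α → σ}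
    (hf : Computable f) : ComputableIn A f :=
  RecursiveIn.of_partrec hf

theorem of_eq {f g : ℕ → ℕ} (hf : ComputableIn A f) (H : ∀ n, f n = g n) :
    ComputableIn A g :=
  funext H ▸ hf

theorem nat_iff {f : ℕ → ℕ} : ComputableIn A f ↔ RecursiveIn A fun n => Part.some (f n) := by
  unfold ComputableIn PartrecIn
  simp [encode_nat]

theorem comp {f g : ℕ → ℕ} (hg : ComputableIn A g) (hf : ComputableIn A f) :
    ComputableIn A fun n => g (f n) :=
  nat_iff.2 <| (RecursiveIn.comp (nat_iff.1 hg) (nat_iff.1 hf)).of_eq fun n => by simp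

theorem pair {f g : ℕ → ℕ} (hf : ComputableIn A f) (hg : ComputableIn A g) :
    ComputableIn A fun n => Nat.pair (f n) (g n) :=
  nat_iff.2 <| (RecursiveIn.pair (nat_iff.1 hf) (nat_iff.1 hg)).of_eq fun n => by
    simp [Seq.seq]

theorem comp₂ {f g : ℕ → ℕ} {h : ℕ → ℕ → ℕ} (hh : Computable₂ h) (hf : ComputableIn A f)
    (hg : ComputableIn A g) : ComputableIn A fun n => h (f n) (g n) :=
  ((of_computable (hh.comp (Computable.fst.comp Computable.unpair)
    (Computable.snd.comp Computable.unpair))).comp (hf.pair hg)).of_eq fun n => by simp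

theorem prec {f g : ℕ → ℕ} {F : ℕ → ℕ → ℕ} (hf : ComputableIn A f) (hg : ComputableIn A g)
    (hF_zero : ∀ a, F a 0 = f a)
    (hF_succ : ∀ a n, F a (n + 1) = g (Nat.pair a (Nat.pair n (F a n)))) :
    ComputableIn A (Nat.unpaired F) :=
  nat_iff.2 <| (RecursiveIn.prec (nat_iff.1 hf) (nat_iff.1 hg)).of_eq fun p => by
    simp only [Nat.unpaired]
    induction (Nat.unpair p).2 with
    | zero => simp [hF_zero]
    | succ n ih => simp only [Bind.bind] at ih; simp [ih, hF_succ]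

theorem partialSups {p : ℕ → ℕ} (hp : ComputableIn A p) : ComputableIn A (partialSups p) := by
  have hprev : Primrec fun m : ℕ => m.unpair.2.unpair.2 :=
    Primrec.snd.comp (Primrec.unpair.comp (Primrec.snd.comp Primrec.unpair))
  have hindex : Primrec fun m : ℕ => m.unpair.2.unpair.1 + 1 :=
    Primrec.succ.comp (Primrec.fst.comp (Primrec.unpair.comp (Primrec.snd.comp Primrec.unpair)))
  have hstep : ComputableIn A fun m : ℕ => max m.unpair.2.unpair.2 (p (m.unpair.2.unpair.1 + 1)) :=
    comp₂ Primrec.nat_max.to_comp (of_computable hprev.to_comp)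
      (hp.comp (of_computable hindex.to_comp))
  have hrec : ComputableIn A (Nat.unpaired fun _ n => _root_.partialSups p n) :=
    prec (of_computable (Computable.const (p 0))) hstep (fun _ => partialSups_zero p)
      fun _ n => by simp [max_comm]
  have hpair : ComputableIn A fun n => Nat.pair 0 n :=
    of_computable (Primrec₂.natPair.comp (Primrec.const 0) Primrec.id).to_comp
  exact (hrec.comp hpair).of_eq fun n => by simp

end ComputableIn

theorem CE.of_computablePred {α : Type} [Primcodable α] {p : α → Prop}
    (hp : ComputablePred p) : CE {a | p a} :=
  ⟨_, hp.to_re.map (Computable.const 0).to₂, fun _ => ⟨fun h => ⟨h, trivial⟩, fun h => h.1⟩⟩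

theorem CE.exists_computable_ge_mem {D : Set ℕ} (hD : CE D) (hinf : D.Infinite) :
    ∃ h : ℕ → ℕ, Computable h ∧ ∀ m, m ≤ h m ∧ h m ∈ D := by
  obtain ⟨ψ, hψ, hDψ⟩ := hD
  obtain ⟨c, rfl⟩ := Code.exists_code.1 (Partrec.nat_iff.1 hψ)
  let P : ℕ → ℕ → Prop := fun m t =>
    m ≤ t.unpair.1 ∧ (Code.evaln t.unpair.2 c t.unpair.1).isSome
  have hP : ComputablePred fun p : ℕ × ℕ => P p.1 p.2 := by
    have hn : Primrec fun p : ℕ × ℕ => p.2.unpair.1 :=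
      Primrec.fst.comp (Primrec.unpair.comp Primrec.snd)
    have hk : Primrec fun p : ℕ × ℕ => p.2.unpair.2 :=
      Primrec.snd.comp (Primrec.unpair.comp Primrec.snd)
    refine PrimrecPred.computablePred (PrimrecPred.and (Primrec.nat_le.comp Primrec.fst hn) ?_)
    exact Primrec.eq.comp (Primrec.option_isSome.comp (Code.primrec_evaln.comp
      ((hk.pair (Primrec.const c)).pair hn))) (Primrec.const true)
  have hex : ∀ m, ∃ t, P m t := by
    intro m
    obtain ⟨n, hn, hmn⟩ := hinf.exists_gt m
    obtain ⟨y, hy⟩ := Part.dom_iff_mem.1 ((hDψ n).1 hn)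
    obtain ⟨k, hk⟩ := Code.evaln_complete.1 hy
    exact ⟨Nat.pair n k, by simpa [P, hmn.le, Option.isSome_iff_exists] using ⟨y, hk⟩⟩
  refine ⟨fun m => (Nat.find (hex m)).unpair.1,
    (Primrec.fst.comp Primrec.unpair).to_comp.comp (Computable.find hP hex), fun m => ?_⟩
  obtain ⟨hmn, hhalt⟩ := Nat.find_spec (hex m)
  obtain ⟨y, hy⟩ := Option.isSome_iff_exists.1 hhalt
  exact ⟨hmn, (hDψ _).2 (Part.dom_iff_mem.2 ⟨y, Code.evaln_sound hy⟩)⟩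

theorem lt_of_mem_raise' {x : ℕ} : ∀ {l : List ℕ} {n : ℕ}, x ∈ raise' l n →
    x < n + l.sum + l.length
  | [], _, hx => by simp [raise'] at hx
  | m :: l, n, hx => by
    rcases List.mem_cons.1 hx with rfl | hx
    · simp only [List.sum_cons, List.length_cons]; omega
    · have := lt_of_mem_raise' hx
      simp only [List.sum_cons, List.length_cons]; omega

theorem mem_raise'_replicate_zero {x : ℕ} : ∀ {k n : ℕ},
    x ∈ raise' (List.replicate k 0) n ↔ n ≤ x ∧ x < n + k
  | 0, n => by simp [raise']
  | k + 1, n => by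
    simp only [List.replicate_succ, raise', List.mem_cons, mem_raise'_replicate_zero]
    omega

theorem sum_add_length_le_encode : ∀ l : List ℕ, l.sum + l.length ≤ encode l
  | [] => le_rfl
  | m :: l => by
    have := sum_add_length_le_encode l
    have := Nat.add_le_pair m (encode l)
    simp only [List.sum_cons, List.length_cons, encode_list_cons, encode_nat]
    omega

theorem mem_ofNat_finset_iff {x v : ℕ} :
    x ∈ ofNat (Finset ℕ) v ↔ x ∈ raise' (ofNat (List ℕ) v) 0 := by
  rw [ofNat_of_decode (b := (raise'Finset (ofNat (List ℕ) v) 0).map (eqv ℕ).symm.toEmbedding) rfl]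
  simp [raise'Finset, Finset.mem_def, eqv]

theorem le_of_mem_ofNat_finset {x v : ℕ} (hx : x ∈ ofNat (Finset ℕ) v) : x ≤ v := by
  have hlt := lt_of_mem_raise' (mem_ofNat_finset_iff.1 hx)
  have hle := sum_add_length_le_encode (ofNat (List ℕ) v)
  rw [encode_ofNat] at hle
  omega

theorem computable_finset_range : Computable Finset.range := by
  have hrange : ∀ k, ofNat (Finset ℕ) (encode (List.replicate k 0)) = Finset.range k := by
    intro k
    ext x
    rw [mem_ofNat_finset_iff, ofNat_encode, mem_raise'_replicate_zero, Finset.mem_range]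
    omega
  have hreplicate : Primrec fun k : ℕ => List.replicate k 0 :=
    (Primrec.list_map Primrec.list_range (Primrec.const 0).to₂).of_eq fun k => by
      simp [List.map_const']
  exact ((Computable.ofNat _).comp (Computable.encode.comp hreplicate.to_comp)).of_eq hrange

theorem exists_computable_bound_of_subset_dom {D : Set ℕ} {σ : ℕ →. Finset ℕ}
    (hinf : D.Infinite) (hD : CE D) (hσ : Partrec σ) (hDσ : D ⊆ σ.Dom) :
    ∃ b : ℕ → ℕ, Computable b ∧ ∀ m, ∃ n, m ≤ n ∧ n ∈ D ∧ ∀ S ∈ σ n, ∀ x ∈ S, x ≤ b m := by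
  obtain ⟨h, hh, hhD⟩ := hD.exists_computable_ge_mem hinf
  have hS : Computable fun m => (σ (h m)).get (hDσ (hhD m).2) :=
    (hσ.comp hh).of_eq_tot fun m => Part.get_mem _
  obtain ⟨b, hb, hbS⟩ : ∃ b : ℕ → ℕ, Computable b ∧
      ∀ m, ofNat (Finset ℕ) (b m) = (σ (h m)).get (hDσ (hhD m).2) :=
    ⟨_, Computable.encode.comp hS, fun m => ofNat_encode _⟩
  refine ⟨b, hb, fun m => ⟨h m, (hhD m).1, (hhD m).2, fun S hSσ x hx => ?_⟩⟩
  rw [← Part.get_eq_of_mem hSσ (hDσ (hhD m).2), ← hbS] at hx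
  exact le_of_mem_ofNat_finset hx

theorem not_dgTraces_of_monotone {f : ℕ → ℕ} (hf : Monotone f)
    (hesc : ∀ g : ℕ → ℕ, Computable g → ∃ᶠ n in atTop, g n < f n)
    {D : Set ℕ} {g : ℕ →. ℕ} {σ : ℕ →. Finset ℕ} (hσ : IsDGTrace D g σ) :
    ¬ DGTraces D σ f := by
  obtain ⟨hinf, hD, -, -, -, hσrec, hDσ, -⟩ := hσ
  intro htrace
  obtain ⟨b, hb, hbσ⟩ := exists_computable_bound_of_subset_dom hinf hD hσrec hDσ
  obtain ⟨N, hN⟩ := eventually_atTop.1 htrace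
  obtain ⟨m, hNm, hbm⟩ := frequently_atTop.1 (hesc b hb) N
  obtain ⟨n, hmn, hnD, hbn⟩ := hbσ m
  obtain ⟨S, hS⟩ := Part.dom_iff_mem.1 (hDσ hnD)
  have hfn : f n ∈ S := hN n (hNm.trans hmn) hnD S hS
  exact (hf hmn |>.trans (hbn S hS _ hfn)).not_gt hbm

noncomputable def columnBound : ℕ →. ℕ :=
  fun n => (phi n.unpair.1 n).map fun v => max n (v + 2)

theorem partrec_columnBound : Partrec columnBound :=
  (Code.eval_part.comp ((Computable.ofNat Code).comp (Primrec.fst.comp Primrec.unpair).to_comp)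
    Computable.id).map (Primrec.nat_max.comp Primrec.fst
      (Primrec.succ.comp (Primrec.succ.comp Primrec.snd))).to_comp.to₂

theorem exists_dgTrace_columnBound {f h : ℕ → ℕ} (hh : Computable h)
    (hfh : ∀ᶠ n in atTop, f n ≤ h n) :
    ∃ (D : Set ℕ) (σ : ℕ →. Finset ℕ), IsDGTrace D columnBound σ ∧ DGTraces D σ f := by
  obtain ⟨c, hc⟩ := Code.exists_code.1 (Partrec.nat_iff.1 hh.partrec)
  let D : Set ℕ := {n | n.unpair.1 = encode c}
  have hbound : ∀ n ∈ D, columnBound n = Part.some (max n (h n + 2)) := fun n hn => by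
    simp only [D, Set.mem_ofPred_eq] at hn
    simp [columnBound, phi, hn, hc]
  refine ⟨D, fun n => Part.some (Finset.range (h n + 1)), ⟨?_, ?_, partrec_columnBound, ?_, ?_,
    (computable_finset_range.comp (Primrec.succ.to_comp.comp hh)).partrec, fun _ _ => trivial,
    ?_⟩, ?_⟩
  · exact Set.infinite_of_injective_forall_mem (f := Nat.pair (encode c))
      (fun _ _ hk => (Nat.pair_eq_pair.1 hk).2) fun k => by simp [D]
  · exact CE.of_computablePred (PrimrecPred.computablePred
      (Primrec.eq.comp (Primrec.fst.comp Primrec.unpair) (Primrec.const _)))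
  · intro n hn
    simp [hbound n hn]
  · intro n y hy
    obtain ⟨v, -, rfl⟩ := Part.mem_map_iff _ |>.1 hy
    exact le_max_left _ _
  · intro n hn S hS y hy
    rw [hbound n hn, Part.mem_some_iff] at hy
    rw [Part.mem_some_iff] at hS
    simp only [hS, hy, Finset.card_range]
    omega
  · refine hfh.mono fun n hfn _ S hS => ?_
    rw [Part.mem_some_iff] at hS
    simp only [hS, Finset.mem_range]
    omega

/-- `A` is of hyperimmune degree iff `A` computes a function not traced by
any partial trace, iff for every partial computable `g` there is `f ≤_T A` not traced
by any `(D, g)`-trace for any c.e. `D`. -/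
theorem stmt9 (A : Set ℕ) :
    [HyperimmuneDegree A,
     ∃ f : ℕ → ℕ, ComputableIn A f ∧
       ∀ (D : Set ℕ) (g : ℕ →. ℕ) (σ : ℕ →. Finset ℕ),
         IsDGTrace D g σ → ¬ DGTraces D σ f,
     ∀ g : ℕ →. ℕ, Partrec g → ∃ f : ℕ → ℕ, ComputableIn A f ∧
       ∀ (D : Set ℕ) (σ : ℕ →. Finset ℕ),
         IsDGTrace D g σ → ¬ DGTraces D σ f].TFAE := by
  tfae_have 1 → 2 := by
    rintro ⟨p, hp, hesc⟩
    refine ⟨partialSups p, hp.partialSups, fun D g σ => not_dgTraces_of_monotone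
      (partialSups p).monotone fun h hh => ?_⟩
    exact (hesc h hh).mono fun n hn => hn.trans_le (le_partialSups p n)
  tfae_have 2 → 3 := fun ⟨f, hf, hnot⟩ g _ => ⟨f, hf, fun D σ => hnot D g σ⟩
  tfae_have 3 → 1 := by
    intro h3
    obtain ⟨f, hf, hnot⟩ := h3 columnBound partrec_columnBound
    refine ⟨f, hf, fun h hh => ?_⟩
    by_contra hdom
    obtain ⟨D, σ, hσ, htrace⟩ :=
      exists_dgTrace_columnBound hh ((not_frequently.1 hdom).mono fun n => le_of_not_gt)
    exact hnot D σ hσ htrace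
  tfae_finish

end CichonAnalog
end
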